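/- Let (Ω, μ) be a probability space, n ≥ 1, L ≥ 0, ρ > 0, σ ≥ 0, x ∈ ℝⁿ, and h ∈ ℝⁿ with h ≠ 0. Let G : ℝⁿ × Ω → ℝⁿ be jointly measurable and suppose that for μ-almost every ω: (i) G(·, ω) is L-Lipschitz with respect to the Euclidean norm, and (ii) G(x, ω) ≠ 0. If ∫ ‖G(x, ω) − h‖² dμ(ω) ≤ σ², then ∫ ‖G(x + ρ·G(x, ω)/‖G(x, ω)‖, ω) − h‖² dμ(ω) ≤ 12ρ²L² + 4σ². -/

import Mathlib

open MeasureTheory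

/-!
The SAM step `y = x + (ρ / ‖G x ω‖) • G x ω` moves `x` by at most `|ρ|` (by nothing when
`G x ω = 0`, since `ρ / 0 = 0`), so by Lipschitz continuity `G y ω` stays within `|L| |ρ|` of
`G x ω` for almost every `ω`. Hence `‖G y ω - h‖² ≤ 2 L² ρ² + 2 ‖G x ω - h‖²` pointwise, and
integrating gives `2 L² ρ² + 2 σ²`. As `G y ω - h` and `G x ω - h` differ by a bounded function,
one is square integrable iff the other is, so the junk value of a non-integrable integral is harmless.
-/

theorem norm_sq_le_two_mul_sq_add_two_mul_norm_sq {E : Type*} [SeminormedAddCommGroup E]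
    {a b : E} {r : ℝ} (hab : ‖a - b‖ ≤ r) : ‖a‖ ^ 2 ≤ 2 * r ^ 2 + 2 * ‖b‖ ^ 2 := by
  have hr : ‖a - b‖ ^ 2 ≤ r ^ 2 := pow_le_pow_left₀ (norm_nonneg _) hab 2
  calc ‖a‖ ^ 2 ≤ (‖a - b‖ + ‖b‖) ^ 2 :=
        pow_le_pow_left₀ (norm_nonneg _) (norm_le_norm_sub_add a b) 2
    _ ≤ 2 * (‖a - b‖ ^ 2 + ‖b‖ ^ 2) := add_sq_le
    _ ≤ 2 * r ^ 2 + 2 * ‖b‖ ^ 2 := by linarith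

theorem norm_div_norm_smul_le {E : Type*} [SeminormedAddCommGroup E] [NormedSpace ℝ E]
    (ρ : ℝ) (v : E) : ‖(ρ / ‖v‖) • v‖ ≤ |ρ| := by
  rcases eq_or_ne ‖v‖ 0 with hv | hv
  · simp [hv]
  · rw [norm_smul, Real.norm_eq_abs, abs_div, abs_norm, div_mul_cancel₀ _ hv]

theorem integral_norm_sq_le_of_ae_norm_sub_le {Ω E : Type*} [MeasurableSpace Ω]
    [NormedAddCommGroup E] {μ : Measure Ω} [IsFiniteMeasure μ] {A B : Ω → E} {r : ℝ}
    (hA : AEStronglyMeasurable A μ) (hB : AEStronglyMeasurable B μ)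
    (hAB : ∀ᵐ ω ∂μ, ‖A ω - B ω‖ ≤ r) :
    ∫ ω, ‖A ω‖ ^ 2 ∂μ ≤ 2 * r ^ 2 * μ.real Set.univ + 2 * ∫ ω, ‖B ω‖ ^ 2 ∂μ := by
  have hdiff : MemLp (A - B) 2 μ := MemLp.of_bound (hA.sub hB) r hAB
  by_cases hB2 : MemLp B 2 μ
  · have hBsq := (memLp_two_iff_integrable_sq_norm hB).1 hB2
    calc ∫ ω, ‖A ω‖ ^ 2 ∂μ ≤ ∫ ω, (2 * r ^ 2 + 2 * ‖B ω‖ ^ 2) ∂μ := by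
          refine integral_mono_of_nonneg (ae_of_all _ fun ω => by positivity)
            ((integrable_const _).add (hBsq.const_mul 2)) ?_
          filter_upwards [hAB] with ω h using norm_sq_le_two_mul_sq_add_two_mul_norm_sq h
      _ = 2 * r ^ 2 * μ.real Set.univ + 2 * ∫ ω, ‖B ω‖ ^ 2 ∂μ := by
          rw [integral_add (integrable_const _) (hBsq.const_mul 2), integral_const,
            integral_const_mul, smul_eq_mul, mul_comm (μ.real _)]
  · have hA2 : ¬ MemLp A 2 μ := fun hA2 => hB2 (by simpa using hA2.sub hdiff)
    rw [memLp_two_iff_integrable_sq_norm hA] at hA2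
    rw [integral_undef hA2]
    positivity

theorem sam_perturbed_gradient_variance_bound_general
    {Ω : Type*} [MeasurableSpace Ω] (μ : Measure Ω) [IsProbabilityMeasure μ]
    (n : ℕ) (L : ℝ) (ρ : ℝ)
    (σ : ℝ)
    (x h : EuclideanSpace ℝ (Fin n))
    (G : EuclideanSpace ℝ (Fin n) → Ω → EuclideanSpace ℝ (Fin n))
    (hmeas : Measurable (Function.uncurry G))
    (hLip : ∀ᵐ ω ∂μ, ∀ u v : EuclideanSpace ℝ (Fin n), ‖G u ω - G v ω‖ ≤ L * ‖u - v‖)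
    (hvar : ∫ ω, ‖G x ω - h‖ ^ 2 ∂μ ≤ σ ^ 2) :
    ∫ ω, ‖G (x + (ρ / ‖G x ω‖) • G x ω) ω - h‖ ^ 2 ∂μ ≤ 12 * ρ ^ 2 * L ^ 2 + 4 * σ ^ 2 := by
  set y : Ω → EuclideanSpace ℝ (Fin n) := fun ω => x + (ρ / ‖G x ω‖) • G x ω
  have hGx : Measurable fun ω => G x ω := hmeas.comp (measurable_const.prodMk measurable_id)
  have hy : Measurable y := measurable_const.add ((measurable_const.div hGx.norm).smul hGx)
  have hGy : Measurable fun ω => G (y ω) ω := hmeas.comp (hy.prodMk measurable_id)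
  have hclose : ∀ᵐ ω ∂μ, ‖(G (y ω) ω - h) - (G x ω - h)‖ ≤ |L| * |ρ| := by
    filter_upwards [hLip] with ω hω
    calc _ = ‖G (y ω) ω - G x ω‖ := by rw [sub_sub_sub_cancel_right]
      _ ≤ L * ‖y ω - x‖ := hω (y ω) x
      _ ≤ |L| * |ρ| := by
          rw [add_sub_cancel_left]
          exact (mul_le_mul_of_nonneg_right (le_abs_self L) (norm_nonneg _)).trans
            (mul_le_mul_of_nonneg_left (norm_div_norm_smul_le ρ _) (abs_nonneg L))
  have hmain := integral_norm_sq_le_of_ae_norm_sub_le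
    (hGy.sub_const h).aestronglyMeasurable (hGx.sub_const h).aestronglyMeasurable hclose
  rw [probReal_univ, mul_pow, sq_abs, sq_abs] at hmain
  nlinarith [mul_nonneg (sq_nonneg ρ) (sq_nonneg L), sq_nonneg σ]

/-- First inequality of Lemma 3: for a jointly measurable stochastic
gradient `G` which is a.s. `L`-Lipschitz in its first argument and a.s. nonzero at `x`,
bounded variance `∫ ‖G x ω - h‖² ∂μ ≤ σ²` implies
`∫ ‖G (x + ρ • G x ω / ‖G x ω‖) ω - h‖² ∂μ ≤ 12 ρ² L² + 4 σ²`. -/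
theorem sam_perturbed_gradient_variance_bound
    {Ω : Type*} [MeasurableSpace Ω] (μ : Measure Ω) [IsProbabilityMeasure μ]
    (n : ℕ) (hn : 1 ≤ n) (L : ℝ) (hL : 0 ≤ L) (ρ : ℝ) (hρ : 0 < ρ)
    (σ : ℝ) (hσ : 0 ≤ σ)
    (x h : EuclideanSpace ℝ (Fin n)) (hh : h ≠ 0)
    (G : EuclideanSpace ℝ (Fin n) → Ω → EuclideanSpace ℝ (Fin n))
    (hmeas : Measurable (Function.uncurry G))
    (hLip : ∀ᵐ ω ∂μ, ∀ u v : EuclideanSpace ℝ (Fin n), ‖G u ω - G v ω‖ ≤ L * ‖u - v‖)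
    (hne : ∀ᵐ ω ∂μ, G x ω ≠ 0)
    (hvar : ∫ ω, ‖G x ω - h‖ ^ 2 ∂μ ≤ σ ^ 2) :
    ∫ ω, ‖G (x + (ρ / ‖G x ω‖) • G x ω) ω - h‖ ^ 2 ∂μ ≤ 12 * ρ ^ 2 * L ^ 2 + 4 * σ ^ 2 :=
  sam_perturbed_gradient_variance_bound_general μ n L ρ σ x h G hmeas hLip hvar
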